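/- The perfect domination number of the 9×4 knights graph equals 36; that is, the only perfect dominating set of KN_{9,4} is the entire vertex set. -/

import Mathlib

def knightAdj (p q : ℤ × ℤ) : Prop :=
  (|p.1 - q.1| = 1 ∧ |p.2 - q.2| = 2) ∨ (|p.1 - q.1| = 2 ∧ |p.2 - q.2| = 1)

lemma knightAdj_symm {p q : ℤ × ℤ} (h : knightAdj p q) : knightAdj q p := by
  unfold knightAdj at *
  rcases h with ⟨h1, h2⟩ | ⟨h1, h2⟩
  · left; rw [abs_sub_comm, abs_sub_comm q.2]; exact ⟨h1, h2⟩
  · right; rw [abs_sub_comm, abs_sub_comm q.2]; exact ⟨h1, h2⟩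

lemma knightAdj_irrefl (p : ℤ × ℤ) : ¬ knightAdj p p := by
  unfold knightAdj; simp

/-- The knights graph on an `n`-column, `m`-row chessboard. -/
def KN (n m : ℕ) : SimpleGraph (Fin n × Fin m) where
  Adj p q := knightAdj ((p.1 : ℤ), (p.2 : ℤ)) ((q.1 : ℤ), (q.2 : ℤ))
  symm := ⟨fun _ _ h => knightAdj_symm h⟩
  loopless := ⟨fun p => knightAdj_irrefl _⟩

/-- The infinite knights graph on `ℤ × ℤ`. -/
def KNZZ : SimpleGraph (ℤ × ℤ) where
  Adj := knightAdj
  symm := ⟨fun _ _ h => knightAdj_symm h⟩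
  loopless := ⟨knightAdj_irrefl⟩

/-- The quarter-infinite knights graph on `ℕ × ℕ`. -/
def KNNN : SimpleGraph (ℕ × ℕ) where
  Adj p q := knightAdj ((p.1 : ℤ), (p.2 : ℤ)) ((q.1 : ℤ), (q.2 : ℤ))
  symm := ⟨fun _ _ h => knightAdj_symm h⟩
  loopless := ⟨fun p => knightAdj_irrefl _⟩

/-- The half-plane knights graph on `ℤ × ℕ`. -/
def KNZN : SimpleGraph (ℤ × ℕ) where
  Adj p q := knightAdj (p.1, (p.2 : ℤ)) (q.1, (q.2 : ℤ))
  symm := ⟨fun _ _ h => knightAdj_symm h⟩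
  loopless := ⟨fun p => knightAdj_irrefl _⟩

/-- `S` is a perfect dominating set of `G`: every vertex not in `S` is adjacent to
exactly one vertex of `S`. -/
def IsPerfDomSet {V : Type*} (G : SimpleGraph V) (S : Set V) : Prop :=
  ∀ v ∉ S, ∃! u, u ∈ S ∧ G.Adj v u

/-- The perfect domination number of `G`. -/
noncomputable def perfDomNum {V : Type*} (G : SimpleGraph V) : ℕ :=
  sInf {k | ∃ S : Set V, IsPerfDomSet G S ∧ S.ncard = k}

/-!
Decide the squares one at a time. A partial choice can be abandoned as soon as some square left
out already has two chosen knight-neighbours, or has none and no undecided square among its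
neighbours. On the 9 × 4 board this pruning leaves a backtracking tree of about 4500 nodes, small
enough for the kernel to evaluate, and the only choice surviving it is the full board.
-/

section Search

variable (nb : ℕ → List ℕ)

def IsPerfDomIndicator (n : ℕ) (g : ℕ → Bool) : Prop :=
  ∀ j < n, g j = false → (nb j).countP g = 1

def ExtendsMask (i m : ℕ) (g : ℕ → Bool) : Prop :=
  m < 2 ^ i ∧ ∀ j < i, g j = m.testBit j

/-- For a vertex `j` left out by `m`, the two counts bound the number of chosen neighbours of `j`
in every completion of `m`: the second one also admits the undecided vertices `k ≥ i`. -/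
def feasible (i m : ℕ) : Bool :=
  (List.range i).all fun j => m.testBit j ||
    ((nb j).countP m.testBit ≤ 1 && 1 ≤ (nb j).countP fun k => i ≤ k || m.testBit k)

def allForced : ℕ → ℕ → ℕ → Bool
  | 0, i, m => !feasible nb i m || (List.range i).all m.testBit
  | n + 1, i, m =>
    !feasible nb i m || (allForced n (i + 1) m && allForced n (i + 1) (m ||| 2 ^ i))

variable {nb}

theorem extendsMask_zero (g : ℕ → Bool) : ExtendsMask 0 0 g :=
  ⟨Nat.one_pos, fun _ hj => absurd hj (Nat.not_lt_zero _)⟩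

theorem ExtendsMask.succ_of_false {i m : ℕ} {g : ℕ → Bool} (h : ExtendsMask i m g)
    (hi : g i = false) : ExtendsMask (i + 1) m g := by
  refine ⟨h.1.trans (Nat.pow_lt_pow_succ one_lt_two), fun j hj => ?_⟩
  rcases Nat.lt_succ_iff_lt_or_eq.mp hj with hj | rfl
  · exact h.2 j hj
  · rw [hi, Nat.testBit_eq_false_of_lt h.1]

theorem ExtendsMask.succ_of_true {i m : ℕ} {g : ℕ → Bool} (h : ExtendsMask i m g)
    (hi : g i = true) : ExtendsMask (i + 1) (m ||| 2 ^ i) g := by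
  refine ⟨Nat.or_lt_two_pow (h.1.trans (Nat.pow_lt_pow_succ one_lt_two))
    (Nat.pow_lt_pow_succ one_lt_two), fun j hj => ?_⟩
  rw [Nat.testBit_or, Nat.testBit_two_pow]
  rcases Nat.lt_succ_iff_lt_or_eq.mp hj with hj | rfl
  · simp [h.2 j hj, hj.ne']
  · simp [hi]

theorem feasible_of_extendsMask {n i m : ℕ} {g : ℕ → Bool} (hg : ExtendsMask i m g)
    (hperf : IsPerfDomIndicator nb n g) (hin : i ≤ n) : feasible nb i m = true := by
  simp only [feasible, List.all_eq_true, List.mem_range, Bool.or_eq_true, Bool.and_eq_true,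
    decide_eq_true_eq]
  intro j hj
  by_cases hbit : m.testBit j = true
  · exact Or.inl hbit
  have hcount : (nb j).countP g = 1 :=
    hperf j (by omega) (by rw [hg.2 j hj]; simpa using hbit)
  have hlower : (nb j).countP m.testBit ≤ (nb j).countP g := by
    refine List.countP_mono_left fun k _ hk => ?_
    by_cases hki : k < i
    · rwa [hg.2 k hki]
    · rw [Nat.testBit_eq_false_of_lt (hg.1.trans_le (Nat.pow_le_pow_right two_pos (by omega)))]
        at hk
      exact absurd hk Bool.false_ne_true
  have hupper : (nb j).countP g ≤ (nb j).countP fun k => i ≤ k || m.testBit k := by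
    refine List.countP_mono_left fun k _ hk => ?_
    by_cases hki : k < i
    · simp [← hg.2 k hki, hk]
    · simp [Nat.le_of_not_lt hki]
  exact Or.inr ⟨by omega, by omega⟩

theorem allForced_sound {g : ℕ → Bool} {n i m : ℕ} (hsearch : allForced nb n i m = true)
    (hg : ExtendsMask i m g) (hperf : IsPerfDomIndicator nb (i + n) g) :
    ∀ j < i + n, g j = true := by
  induction n generalizing i m with
  | zero =>
    intro j hj
    simp only [allForced, feasible_of_extendsMask hg hperf le_rfl, Bool.not_true,
      Bool.false_or, List.all_eq_true, List.mem_range] at hsearch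
    rw [hg.2 j hj, hsearch j hj]
  | succ n ih =>
    simp only [allForced, feasible_of_extendsMask hg hperf (Nat.le_add_right i _), Bool.not_true,
      Bool.false_or, Bool.and_eq_true] at hsearch
    rw [show i + (n + 1) = i + 1 + n by omega] at hperf ⊢
    cases hgi : g i with
    | false => exact ih hsearch.1 (hg.succ_of_false hgi) hperf
    | true => exact ih hsearch.2 (hg.succ_of_true hgi) hperf

end Search

section Encoding

open Finset

variable {V : Type*} [Fintype V] (G : SimpleGraph V) [DecidableRel G.Adj] {N : ℕ}

def nbOf (e : V ≃ Fin N) (j : ℕ) : List ℕ :=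
  if h : j < N then ((List.finRange N).filter fun k => G.Adj (e.symm ⟨j, h⟩) (e.symm k)).map Fin.val
  else []

theorem countP_nbOf (e : V ≃ Fin N) (v : V) (p : ℕ → Bool) :
    (nbOf G e (e v)).countP p = #{u | G.Adj v u ∧ p (e u) = true} := by
  have hcount := (List.nodup_finRange N).card_eq_countP
    (P := fun k : Fin N => p k = true ∧ G.Adj v (e.symm k))
  rw [List.toFinset_finRange] at hcount
  rw [nbOf, dif_pos (e v).isLt, List.countP_map, List.countP_filter]
  simp only [Fin.eta, Equiv.symm_apply_apply, Function.comp_apply, Bool.decide_and,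
    Bool.decide_eq_true] at hcount ⊢
  rw [← hcount]
  exact card_equiv e.symm fun k => by simp [and_comm]

theorem eq_univ_of_isPerfDomSet (e : V ≃ Fin N) (hforced : allForced (nbOf G e) N 0 0 = true)
    {S : Set V} (hS : IsPerfDomSet G S) : S = Set.univ := by
  classical
  let g : ℕ → Bool := fun k => if h : k < N then decide (e.symm ⟨k, h⟩ ∈ S) else false
  have hg : ∀ u, g (e u) = decide (u ∈ S) := fun u => by simp [g]
  have hperf : IsPerfDomIndicator (nbOf G e) N g := by
    intro j hj hgj
    obtain ⟨v, rfl⟩ : ∃ v, (e v : ℕ) = j := ⟨e.symm ⟨j, hj⟩, by simp⟩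
    rw [countP_nbOf, card_eq_one_iff_existsUnique]
    simpa [hg, and_comm] using hS v (by simpa [hg] using hgj)
  refine Set.eq_univ_of_forall fun u => ?_
  have hall := allForced_sound hforced (extendsMask_zero g) (by rwa [Nat.zero_add])
  simpa [hg] using hall (e u) (by simp)

end Encoding

theorem isPerfDomSet_univ {V : Type*} (G : SimpleGraph V) : IsPerfDomSet G Set.univ :=
  fun v hv => absurd (Set.mem_univ v) hv

theorem perfDomNum_eq_natCard {V : Type*} (G : SimpleGraph V)
    (h : ∀ S, IsPerfDomSet G S → S = Set.univ) : perfDomNum G = Nat.card V := by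
  have hcards : {k | ∃ S : Set V, IsPerfDomSet G S ∧ S.ncard = k} = {Nat.card V} := by
    ext k
    constructor
    · rintro ⟨S, hS, rfl⟩
      rw [h S hS, Set.ncard_univ, Set.mem_singleton_iff]
    · rintro rfl
      exact ⟨Set.univ, isPerfDomSet_univ G, Set.ncard_univ V⟩
  rw [perfDomNum, hcards, csInf_singleton]

instance (p q : ℤ × ℤ) : Decidable (knightAdj p q) :=
  inferInstanceAs (Decidable ((_ ∧ _) ∨ (_ ∧ _)))

instance (n m : ℕ) : DecidableRel (KN n m).Adj := fun _ _ =>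
  inferInstanceAs (Decidable (knightAdj _ _))

theorem allForced_KN_9_4 : allForced (nbOf (KN 9 4) finProdFinEquiv) 36 0 0 = true := by
  decide +kernel

theorem stmt13 :
    perfDomNum (KN 9 4) = 36 ∧
    ∀ S : Set (Fin 9 × Fin 4), IsPerfDomSet (KN 9 4) S → S = Set.univ := by
  have honly : ∀ S, IsPerfDomSet (KN 9 4) S → S = Set.univ := fun _ =>
    eq_univ_of_isPerfDomSet (KN 9 4) finProdFinEquiv allForced_KN_9_4
  exact ⟨(perfDomNum_eq_natCard _ honly).trans (by simp), honly⟩
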